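/- Let S be a t-conorm, R a fuzzy binary relation on X, and (P,I) a weak decomposition of R with respect to S. Then: (FP1) P is asymmetric; (FP2) I is symmetric; (FP3) P(x,y) ≤ R(x,y) for all x,y; (FP5) P(x,y) = 0 implies R(x,y) = I(x,y); (FP6) if I(x,y) ≤ I(z,w) and P(x,y) ≤ P(z,w) then R(x,y) ≤ R(z,w); and R(x,y) > R(y,x) implies P(x,y) > 0. Moreover, if for every t ∈ [0,1) there is a neighborhood of 0 on which s ↦ S(s,t) is strictly increasing, then also P(x,y) > 0 implies R(x,y) > R(y,x). -/

import Mathlib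

structure Tconorm where
  S : unitInterval → unitInterval → unitInterval
  comm : ∀ a b, S a b = S b a
  assoc : ∀ a b c, S a (S b c) = S (S a b) c
  mono : ∀ a b c d, a ≤ c → b ≤ d → S a b ≤ S c d
  S_zero : ∀ a, S a 0 = a
  S_one : ∀ a, S a 1 = 1

structure Tnorm where
  T : unitInterval → unitInterval → unitInterval
  comm : ∀ a b, T a b = T b a
  assoc : ∀ a b c, T a (T b c) = T (T a b) c
  mono : ∀ a b c d, a ≤ c → b ≤ d → T a b ≤ T c d
  T_one : ∀ a, T a 1 = a
  T_zero : ∀ a, T a 0 = 0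

/-- A fuzzy binary relation `P` is asymmetric. -/
def FAsymm {X : Type*} (P : X → X → unitInterval) : Prop :=
  ∀ x y, 0 < P x y → P y x = 0

/-- A fuzzy binary relation `I` is symmetric. -/
def FSymm {X : Type*} (I : X → X → unitInterval) : Prop :=
  ∀ x y, I x y = I y x

/-- `(P, I)` is a weak decomposition of `R` with respect to the t-conorm `S`. -/
def IsWeakDecomp {X : Type*} (S : Tconorm) (R P I : X → X → unitInterval) : Prop :=
  FAsymm P ∧ FSymm I ∧ (∀ x y, R x y = S.S (P x y) (I x y)) ∧
    ∀ x y, I x y = 1 → P x y = 0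

/-- `(P, I)` is a strong decomposition of `R` with respect to `(T, S)`. -/
def IsStrongDecomp {X : Type*} (T : Tnorm) (S : Tconorm)
    (R P I : X → X → unitInterval) : Prop :=
  FAsymm P ∧ FSymm I ∧ (∀ x y, R x y = S.S (P x y) (I x y)) ∧
    ∀ x y, T.T (P x y) (I x y) = 0

/-- The triplet `(R, P, I)` is a fuzzy preference (FP1–FP6). -/
def IsFuzzyPref {X : Type*} (R P I : X → X → unitInterval) : Prop :=
  (∀ x y, 0 < P x y → P y x = 0) ∧
  (∀ x y, I x y = I y x) ∧
  (∀ x y, P x y ≤ R x y) ∧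
  (∀ x y, R y x < R x y ↔ 0 < P x y) ∧
  (∀ x y, P x y = 0 → R x y = I x y) ∧
  (∀ x y z w, I x y ≤ I z w → P x y ≤ P z w → R x y ≤ R z w)

open Filter Topology Set

theorem exists_mem_Ioc_of_mem_nhds {α : Type*} [TopologicalSpace α] [LinearOrder α]
    [OrderTopology α] [DenselyOrdered α] {a b : α} {U : Set α} (hU : U ∈ 𝓝 a)
    (hab : a < b) :
    ∃ c ∈ U, c ∈ Ioc a b := by
  obtain ⟨q, ⟨haq, hqb⟩, hqU⟩ := exists_Ico_subset_of_mem_nhds' hU hab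
  obtain ⟨c, hac, hcq⟩ := exists_between haq
  exact ⟨c, hqU ⟨hac.le, hcq⟩, hac, hcq.le.trans hqb⟩

namespace Tconorm

variable (S : Tconorm)

theorem zero_S (a : unitInterval) : S.S 0 a = a := by
  rw [S.comm, S.S_zero]

theorem le_S_left (a b : unitInterval) : a ≤ S.S a b :=
  calc a = S.S a 0 := (S.S_zero a).symm
  _ ≤ S.S a b := S.mono _ _ _ _ le_rfl unitInterval.nonneg'

theorem le_S_right (a b : unitInterval) : b ≤ S.S a b :=
  calc b = S.S 0 b := (S.zero_S b).symm
  _ ≤ S.S a b := S.mono _ _ _ _ unitInterval.nonneg' le_rfl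

/-- The strict gain at some small `s ∈ (0, p]` is carried up to `p` by monotonicity. -/
theorem lt_S_of_strictMonoOn {t p : unitInterval} {U : Set unitInterval} (hU : U ∈ 𝓝 0)
    (hmono : StrictMonoOn (S.S · t) U) (hp : 0 < p) : t < S.S p t := by
  obtain ⟨s, hsU, hs0, hsp⟩ := exists_mem_Ioc_of_mem_nhds hU hp
  calc t = S.S 0 t := (S.zero_S t).symm
  _ < S.S s t := hmono (mem_of_mem_nhds hU) hsU hs0
  _ ≤ S.S p t := S.mono _ _ _ _ hsp le_rfl

end Tconorm

namespace IsWeakDecomp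

variable {X : Type*} {S : Tconorm} {R P I : X → X → unitInterval}

theorem strict_le (h : IsWeakDecomp S R P I) (x y : X) : P x y ≤ R x y :=
  h.2.2.1 x y ▸ S.le_S_left _ _

theorem indiff_le (h : IsWeakDecomp S R P I) (x y : X) : I x y ≤ R x y :=
  h.2.2.1 x y ▸ S.le_S_right _ _

theorem eq_indiff_of_strict_eq_zero (h : IsWeakDecomp S R P I) {x y : X} (hP : P x y = 0) :
    R x y = I x y := by
  rw [h.2.2.1, hP, S.zero_S]

theorem le_of_indiff_le_of_strict_le (h : IsWeakDecomp S R P I) {x y z w : X}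
    (hI : I x y ≤ I z w) (hP : P x y ≤ P z w) : R x y ≤ R z w := by
  rw [h.2.2.1, h.2.2.1]
  exact S.mono _ _ _ _ hP hI

theorem strict_pos_of_lt (h : IsWeakDecomp S R P I) {x y : X} (hR : R y x < R x y) :
    0 < P x y := by
  refine unitInterval.pos_iff_ne_zero.mpr fun hP => hR.not_ge ?_
  rw [h.eq_indiff_of_strict_eq_zero hP, h.2.1 x y]
  exact h.indiff_le y x

theorem lt_of_strict_pos (h : IsWeakDecomp S R P I)
    (hS : ∀ t : unitInterval, t < 1 →
      ∃ U ∈ 𝓝 (0 : unitInterval), StrictMonoOn (S.S · t) U)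
    {x y : X} (hP : 0 < P x y) : R y x < R x y := by
  have hRyx : R y x = I x y := by
    rw [h.eq_indiff_of_strict_eq_zero (h.1 x y hP), h.2.1]
  have hI : I x y < 1 := unitInterval.lt_one_iff_ne_one.mpr fun hI => hP.ne' (h.2.2.2 x y hI)
  obtain ⟨U, hU, hmono⟩ := hS _ hI
  rw [hRyx, h.2.2.1]
  exact S.lt_S_of_strictMonoOn hU hmono hP

end IsWeakDecomp

/-- Any weak decomposition of `R` satisfies FP1, FP2, FP3, FP5, FP6 and the direct
implication of FP4; moreover if `S(·, t)` is strictly increasing on a neighborhood of `0`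
for every `t < 1`, the converse implication of FP4 also holds. -/
theorem weak_decomposition_properties {X : Type*} (S : Tconorm)
    (R P I : X → X → unitInterval) (h : IsWeakDecomp S R P I) :
    FAsymm P ∧
    FSymm I ∧
    (∀ x y, P x y ≤ R x y) ∧
    (∀ x y, P x y = 0 → R x y = I x y) ∧
    (∀ x y z w, I x y ≤ I z w → P x y ≤ P z w → R x y ≤ R z w) ∧
    (∀ x y, R y x < R x y → 0 < P x y) ∧
    ((∀ t : unitInterval, t < 1 → ∃ U ∈ nhds (0 : unitInterval),
        StrictMonoOn (fun s => S.S s t) U) →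
      ∀ x y, 0 < P x y → R y x < R x y) :=
  ⟨h.1, h.2.1, h.strict_le, fun _ _ => h.eq_indiff_of_strict_eq_zero,
    fun _ _ _ _ => h.le_of_indiff_le_of_strict_le, fun _ _ => h.strict_pos_of_lt,
    fun hS _ _ => h.lt_of_strict_pos hS⟩
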